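/- Let ρ be a Borel probability measure on ℝ and E_ρ the position observable on L²(ℝ). If the limit of resolution γ_{E_ρ} = inf{α > 0 : E_ρ is α-regular} equals 0, then there exist x̄ ∈ ℝ and a probability measure λ on ℝ with x̄ ∈ supp(λ) such that ρ = ½ δ_{x̄} + ½ λ. -/

import Mathlib

/-!
Long intervals are always regular: `x ↦ ρ(I - x)` is close to `1` on some translates and close
to `0` on others, and a multiplication operator by `0 ≤ g ≤ 1` is positive, so its norm (which is
at least the essential infimum of `g` on any set of positive measure) lies in its spectrum. Hence
the set defining `γ` is nonempty, and `γ = 0` yields `β`-regularity for arbitrarily small `β`.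
If some length `α > β` had all its intervals of `ρ`-mass `≤ 1/2`, then `E(I_{p;α})` for `p` in the
support of `ρ` would be a nonzero multiplication operator of norm `≤ 1/2`: nontrivial but not
regular. So for every `α > 0` some interval of length `α` has mass `> 1/2`. Any two such intervals
meet, so all of them share a point `x̄`; every ball around `x̄` then has mass `> 1/2`, whence
`ρ{x̄} ≥ 1/2` and `λ = 2ρ - δ_x̄` is a probability measure charging every ball around `x̄`.
-/

open MeasureTheory Complex
open scoped ENNReal

noncomputable section

/-- `L²(ℝ)` with Lebesgue measure. -/
abbrev L2 : Type := Lp ℂ 2 (volume : Measure ℝ)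

/-- `T` is the operator of multiplication by the bounded function `x ↦ ρ(X − x)`. -/
def IsMulByMeas (ρ : Measure ℝ) (X : Set ℝ) (T : L2 →L[ℂ] L2) : Prop :=
  ∀ f : L2, (T f : ℝ → ℂ) =ᵐ[volume]
    fun x => ((ρ ((· + x) ⁻¹' X)).toReal : ℂ) * (f : ℝ → ℂ) x

/-- An effect is regular if its spectrum extends both strictly above and strictly
below `1/2`. -/
def IsRegularEffect (A : L2 →L[ℂ] L2) : Prop :=
  (∃ z ∈ spectrum ℂ A, 1 / 2 < z.re) ∧ (∃ z ∈ spectrum ℂ A, z.re < 1 / 2)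

/-- `E` is `α`-regular: every nontrivial effect `E(I_{x;r})`, `r ≥ α`, is regular. -/
def AlphaRegular (E : Set ℝ → (L2 →L[ℂ] L2)) (α : ℝ) : Prop :=
  ∀ x r : ℝ, α ≤ r →
    E (Set.Icc (x - r / 2) (x + r / 2)) ≠ 0 →
    E (Set.Icc (x - r / 2) (x + r / 2)) ≠ 1 →
    IsRegularEffect (E (Set.Icc (x - r / 2) (x + r / 2)))

open Filter Set Metric
open scoped InnerProductSpace

section MulOperator

variable {X : Type*} [MeasurableSpace X] {μ : Measure X}

def IsMulOperator (T : Lp ℂ 2 μ →L[ℂ] Lp ℂ 2 μ) (g : X → ℝ) : Prop :=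
  ∀ f : Lp ℂ 2 μ, T f =ᵐ[μ] fun x => (g x : ℂ) * f x

namespace IsMulOperator

variable {T S : Lp ℂ 2 μ →L[ℂ] Lp ℂ 2 μ} {g h : X → ℝ}

theorem one : IsMulOperator (1 : Lp ℂ 2 μ →L[ℂ] Lp ℂ 2 μ) 1 :=
  fun _ => Eventually.of_forall fun _ => by simp

theorem sub (hT : IsMulOperator T g) (hS : IsMulOperator S h) :
    IsMulOperator (T - S) (g - h) := by
  intro f
  filter_upwards [Lp.coeFn_sub (T f) (S f), hT f, hS f] with x hx hTx hSx
  rw [sub_apply, hx, Pi.sub_apply, hTx, hSx, Pi.sub_apply, ofReal_sub, sub_mul]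

theorem inner_apply_self (hT : IsMulOperator T g) (f : Lp ℂ 2 μ) :
    ⟪T f, f⟫_ℂ = ((∫ x, g x * ‖f x‖ ^ 2 ∂μ : ℝ) : ℂ) := by
  rw [L2.inner_def, ← integral_complex_ofReal]
  refine integral_congr_ae ?_
  filter_upwards [hT f] with x hx
  rw [hx, RCLike.inner_apply, map_mul, conj_ofReal, mul_left_comm, mul_conj']
  push_cast
  rfl

theorem nonneg (hT : IsMulOperator T g) (hg : 0 ≤ g) : 0 ≤ T := by
  rw [ContinuousLinearMap.nonneg_iff_isPositive, ContinuousLinearMap.isPositive_iff_complex]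
  intro f
  simp only [hT.inner_apply_self f, RCLike.re_to_complex, ofReal_re, true_and]
  exact integral_nonneg fun x => mul_nonneg (hg x) (sq_nonneg _)

theorem opNorm_le (hT : IsMulOperator T g) {M : ℝ} (hM : 0 ≤ M) (hg : ∀ x, |g x| ≤ M) :
    ‖T‖ ≤ M := by
  refine T.opNorm_le_bound hM fun f => ?_
  have hle : ‖T f‖ ≤ ‖(M : ℂ) • f‖ := by
    refine Lp.norm_le_norm_of_ae_le ?_
    filter_upwards [hT f, Lp.coeFn_smul (M : ℂ) f] with x hTx hMx
    rw [hTx, hMx, Pi.smul_apply, norm_smul, norm_mul, norm_real, norm_real, Real.norm_eq_abs,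
      Real.norm_of_nonneg hM]
    exact mul_le_mul_of_nonneg_right (hg x) (norm_nonneg _)
  rwa [norm_smul, norm_real, Real.norm_of_nonneg hM] at hle

theorem le_opNorm (hT : IsMulOperator T g) {s : Set X} (hs : MeasurableSet s) (hμs : μ s ≠ ∞)
    (hμs₀ : μ s ≠ 0) {c : ℝ} (hc : ∀ x ∈ s, c ≤ |g x|) : c ≤ ‖T‖ := by
  obtain hc₀ | hc₀ := le_or_gt c 0
  · exact hc₀.trans (norm_nonneg T)
  set f := indicatorConstLp 2 hs hμs (1 : ℂ)
  have hf : 0 < ‖f‖ := by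
    rw [norm_indicatorConstLp two_ne_zero ENNReal.ofNat_ne_top, norm_one, one_mul]
    exact Real.rpow_pos_of_pos (ENNReal.toReal_pos hμs₀ hμs) _
  have hle : ‖(c : ℂ) • f‖ ≤ ‖T f‖ := by
    refine Lp.norm_le_norm_of_ae_le ?_
    filter_upwards [hT f, Lp.coeFn_smul (c : ℂ) f,
      indicatorConstLp_coeFn (hs := hs) (hμs := hμs) (c := (1 : ℂ))] with x hTx hcx hfx
    rw [hTx, hcx, Pi.smul_apply, hfx, norm_smul, norm_mul, norm_real, norm_real]
    by_cases hx : x ∈ s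
    · simpa [hx, abs_of_pos hc₀] using hc x hx
    · simp [hx]
  rw [norm_smul, norm_real, Real.norm_of_nonneg hc₀.le] at hle
  exact le_of_mul_le_mul_right (hle.trans (T.le_opNorm f)) hf

theorem exists_mem_spectrum_le_re (hT : IsMulOperator T g) (hg : 0 ≤ g) {s : Set X}
    (hs : MeasurableSet s) (hμs : μ s ≠ ∞) (hμs₀ : μ s ≠ 0) {c : ℝ} (hc₀ : 0 < c)
    (hc : ∀ x ∈ s, c ≤ g x) : ∃ z ∈ spectrum ℂ T, c ≤ z.re := by
  have hcT : c ≤ ‖T‖ := hT.le_opNorm hs hμs hμs₀ fun x hx => (hc x hx).trans (le_abs_self _)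
  have : Nontrivial (Lp ℂ 2 μ →L[ℂ] Lp ℂ 2 μ) :=
    nontrivial_of_ne T 0 fun h => by rw [h, norm_zero] at hcT; linarith
  refine ⟨‖T‖, ?_, by simpa using hcT⟩
  simpa using (spectrum.algebraMap_mem_iff ℂ).mpr
    (CStarAlgebra.norm_mem_spectrum_of_nonneg (hT.nonneg hg))

theorem exists_mem_spectrum_re_le (hT : IsMulOperator T g) (hg : g ≤ 1) {s : Set X}
    (hs : MeasurableSet s) (hμs : μ s ≠ ∞) (hμs₀ : μ s ≠ 0) {c : ℝ} (hc₀ : 0 < c)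
    (hc : ∀ x ∈ s, g x ≤ 1 - c) : ∃ z ∈ spectrum ℂ T, z.re ≤ 1 - c := by
  obtain ⟨z, hz, hcz⟩ := (one.sub hT).exists_mem_spectrum_le_re (sub_nonneg.mpr hg) hs hμs hμs₀
    hc₀ fun x hx => by simp only [Pi.sub_apply, Pi.one_apply]; linarith [hc x hx]
  have h1 := spectrum.singleton_sub_eq T (1 : ℂ)
  rw [map_one] at h1
  rw [← h1] at hz
  obtain ⟨_, rfl, w, hw, rfl⟩ := hz
  rw [sub_re, one_re] at hcz
  exact ⟨w, hw, by linarith⟩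

theorem re_le_of_mem_spectrum (hT : IsMulOperator T g) {M : ℝ} (hM : 0 ≤ M)
    (hg : ∀ x, |g x| ≤ M) {z : ℂ} (hz : z ∈ spectrum ℂ T) : z.re ≤ M :=
  calc z.re ≤ ‖z‖ := re_le_norm z
    _ ≤ ‖T‖ * ‖(1 : Lp ℂ 2 μ →L[ℂ] Lp ℂ 2 μ)‖ := spectrum.norm_le_norm_mul_of_mem hz
    _ ≤ ‖T‖ := mul_le_of_le_one_right (norm_nonneg T) ContinuousLinearMap.norm_id_le
    _ ≤ M := hT.opNorm_le hM hg

end IsMulOperator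

end MulOperator

theorem exists_forall_mem_Icc_of_forall_le {α ι : Type*} [ConditionallyCompleteLattice α]
    [Nonempty ι] {a b : ι → α} (h : ∀ i j, a i ≤ b j) : ∃ x, ∀ i, x ∈ Icc (a i) (b i) :=
  ⟨⨆ i, a i, fun i => ⟨le_ciSup ⟨b i, forall_mem_range.mpr fun j => h j i⟩ i,
    ciSup_le fun j => h j i⟩⟩

theorem le_measure_singleton_of_forall_le_measure_closedBall {X : Type*} [MetricSpace X]
    [MeasurableSpace X] [OpensMeasurableSpace X] {μ : Measure X} [IsFiniteMeasure μ] {x : X}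
    {c : ℝ≥0∞} (h : ∀ ε > 0, c ≤ μ (closedBall x ε)) : c ≤ μ {x} := by
  have hlim := tendsto_measure_cthickening_of_isClosed (μ := μ) ⟨1, one_pos, measure_ne_top _ _⟩
    (isClosed_singleton (x := x))
  refine ge_of_tendsto (hlim.mono_left (nhdsWithin_le_nhds (s := Ioi 0))) ?_
  filter_upwards [self_mem_nhdsWithin] with ε (hε : 0 < ε)
  rw [cthickening_singleton x hε.le]
  exact h ε hε

theorem exists_eq_half_smul_dirac_add_half_smul {X : Type*} [MeasurableSpace X]
    [MeasurableSingletonClass X] (ρ : Measure X) [IsProbabilityMeasure ρ] {x : X}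
    (hx : 2⁻¹ ≤ ρ {x}) :
    ∃ lam : Measure X, IsProbabilityMeasure lam ∧
      ρ = (1 / 2 : ℝ≥0∞) • Measure.dirac x + (1 / 2 : ℝ≥0∞) • lam := by
  -- `lam = 2ρ - δ_x`, written without subtracting measures
  set lam := (2 : ℝ≥0∞) • ((ρ {x} - 2⁻¹) • Measure.dirac x + ρ.restrict {x}ᶜ)
  have hρ : ρ = (1 / 2 : ℝ≥0∞) • Measure.dirac x + (1 / 2 : ℝ≥0∞) • lam := by
    rw [smul_smul, one_div, ENNReal.inv_mul_cancel two_ne_zero ENNReal.ofNat_ne_top, one_smul,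
      ← add_assoc, ← add_smul, add_tsub_cancel_of_le hx, ← ρ.restrict_singleton,
      ρ.restrict_add_restrict_compl (measurableSet_singleton x)]
  have huniv : (2⁻¹ : ℝ≥0∞) + 2⁻¹ * lam univ = 2⁻¹ + 2⁻¹ * 1 := by
    rw [mul_one, ENNReal.inv_two_add_inv_two]
    simpa [one_div] using (congrArg (· univ) hρ).symm
  exact ⟨lam, ⟨(ENNReal.mul_right_inj (by simp) (by simp)).mp
    ((ENNReal.add_right_inj (by simp)).mp huniv)⟩, hρ⟩

theorem volume_Icc_ne_zero {a b : ℝ} (hab : a < b) : volume (Icc a b) ≠ 0 := by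
  simpa [Real.volume_Icc] using hab

theorem inv_two_lt_measure_iff {X : Type*} [MeasurableSpace X] {μ : Measure X} [IsFiniteMeasure μ]
    {s : Set X} : 2⁻¹ < μ s ↔ 1 / 2 < μ.real s := by
  rw [← ENNReal.toReal_lt_toReal (by simp) (measure_ne_top μ s)]
  simp [measureReal_def]

theorem exists_half_lt_measureReal_Icc (ρ : Measure ℝ) [IsProbabilityMeasure ρ] :
    ∃ u v : ℝ, 1 / 2 < ρ.real (Icc u v) := by
  obtain ⟨K, -, hK, hρK⟩ := MeasurableSet.univ.exists_lt_isCompact (μ := ρ)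
    (r := 2⁻¹) (by simp [ENNReal.inv_lt_one])
  have hsub : K ⊆ Icc (sInf K) (sSup K) := subset_Icc_csInf_csSup hK.bddBelow hK.bddAbove
  exact ⟨sInf K, sSup K, inv_two_lt_measure_iff.mp (hρK.trans_le (measure_mono hsub))⟩

theorem IsMulByMeas.isMulOperator_Icc {ρ : Measure ℝ} {a b : ℝ} {T : L2 →L[ℂ] L2}
    (hT : IsMulByMeas ρ (Icc a b) T) :
    IsMulOperator T fun x => ρ.real (Icc (a - x) (b - x)) := by
  intro f
  simpa only [measureReal_def, preimage_add_const_Icc] using hT f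

section ProbabilityOnReal

variable {ρ : Measure ℝ} [IsProbabilityMeasure ρ]

/-- The multiplier is `≥ ρ(Icc u v)` on the translates that put `Icc u v` inside the shifted
interval, and `≤ 1 - ρ(Icc u v)` on those that make the two disjoint. -/
theorem isRegularEffect_of_half_lt_measureReal_Icc {a b u v : ℝ} {T : L2 →L[ℂ] L2}
    (hT : IsMulByMeas ρ (Icc a b) T) (huv : 1 / 2 < ρ.real (Icc u v))
    (hab : v - u + 1 ≤ b - a) : IsRegularEffect T := by
  have hT' := hT.isMulOperator_Icc
  have hc₀ : 0 < ρ.real (Icc u v) := by linarith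
  constructor
  · obtain ⟨z, hz, hcz⟩ := hT'.exists_mem_spectrum_le_re (fun _ => measureReal_nonneg)
      measurableSet_Icc measure_Icc_lt_top.ne (volume_Icc_ne_zero (by linarith : a - u < b - v))
      hc₀ fun x hx => measureReal_mono (Icc_subset_Icc (by linarith [hx.1]) (by linarith [hx.2]))
    exact ⟨z, hz, by linarith⟩
  · obtain ⟨z, hz, hcz⟩ := hT'.exists_mem_spectrum_re_le (fun _ => measureReal_le_one)
      measurableSet_Icc measure_Icc_lt_top.ne
      (volume_Icc_ne_zero (by linarith : b - u + 1 < b - u + 2)) hc₀ fun x hx => by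
        rw [← probReal_compl_eq_one_sub measurableSet_Icc]
        refine measureReal_mono fun y hy hy' => ?_
        linarith [hx.1, hy.2, hy'.1]
    exact ⟨z, hz, by linarith⟩

theorem not_alphaRegular_of_measureReal_Icc_le_half {E : Set ℝ → (L2 →L[ℂ] L2)}
    (hE : ∀ X : Set ℝ, MeasurableSet X → IsMulByMeas ρ X (E X)) {α β : ℝ} (hα : 0 < α)
    (hβα : β ≤ α) (hρ : ∀ x, ρ.real (Icc (x - α / 2) (x + α / 2)) ≤ 1 / 2) :
    ¬ AlphaRegular E β := by
  obtain ⟨p, hp⟩ := ρ.nonempty_support (IsProbabilityMeasure.ne_zero ρ)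
  set T := E (Icc (p - α / 2) (p + α / 2))
  have hT : IsMulOperator T _ :=
    (hE (Icc (p - α / 2) (p + α / 2)) measurableSet_Icc).isMulOperator_Icc
  have hg : ∀ x, |ρ.real (Icc (p - α / 2 - x) (p + α / 2 - x))| ≤ 1 / 2 := fun x => by
    rw [abs_of_nonneg measureReal_nonneg]
    convert hρ (p - x) using 3 <;> ring
  have hc₀ : 0 < ρ.real (Icc (p - α / 4) (p + α / 4)) := by
    refine ENNReal.toReal_pos ?_ (measure_ne_top ρ _)
    exact ((Measure.mem_support_iff_forall p).mp hp _
      (Icc_mem_nhds (by linarith) (by linarith))).ne'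
  have hcT : ρ.real (Icc (p - α / 4) (p + α / 4)) ≤ ‖T‖ :=
    hT.le_opNorm measurableSet_Icc measure_Icc_lt_top.ne
      (volume_Icc_ne_zero (by linarith : -(α / 4) < α / 4)) fun x hx => by
        rw [abs_of_nonneg measureReal_nonneg]
        exact measureReal_mono (Icc_subset_Icc (by linarith [hx.1]) (by linarith [hx.2]))
  have hT₀ : T ≠ 0 := fun h => by rw [h, norm_zero] at hcT; linarith
  have : Nontrivial L2 := by
    by_contra h
    rw [not_nontrivial_iff_subsingleton] at h
    exact hT₀ (Subsingleton.elim _ _)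
  have hT₁ : T ≠ 1 := fun h => by
    have := hT.opNorm_le (by norm_num) hg
    rw [h, norm_one] at this
    norm_num at this
  intro hreg
  obtain ⟨z, hz, hz_re⟩ := (hreg p α hβα hT₀ hT₁).1
  exact hz_re.not_ge (hT.re_le_of_mem_spectrum (by norm_num) hg hz)

theorem exists_half_lt_measureReal_Icc_of_sInf_eq_zero {E : Set ℝ → (L2 →L[ℂ] L2)}
    (hE : ∀ X : Set ℝ, MeasurableSet X → IsMulByMeas ρ X (E X))
    (hγ : sInf {α : ℝ | 0 < α ∧ AlphaRegular E α} = 0) {α : ℝ} (hα : 0 < α) :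
    ∃ x, 1 / 2 < ρ.real (Icc (x - α / 2) (x + α / 2)) := by
  by_contra! hρ
  obtain ⟨u, v, huv⟩ := exists_half_lt_measureReal_Icc ρ
  -- `sInf ∅ = 0` as well, so the set has to be shown nonempty first
  have hreg : AlphaRegular E (|v - u| + 1) := fun x r hr _ _ =>
    isRegularEffect_of_half_lt_measureReal_Icc (hE _ measurableSet_Icc) huv
      (by linarith [le_abs_self (v - u)])
  obtain ⟨β, ⟨-, hβ⟩, hβα⟩ := exists_lt_of_csInf_lt (s := {α : ℝ | 0 < α ∧ AlphaRegular E α})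
    ⟨_, by positivity, hreg⟩ (hγ ▸ hα)
  exact not_alphaRegular_of_measureReal_Icc_le_half hE hα hβα.le hρ hβ

theorem exists_forall_inv_two_lt_measure_closedBall
    (h : ∀ α > 0, ∃ x, 1 / 2 < ρ.real (Icc (x - α / 2) (x + α / 2))) :
    ∃ x₀, ∀ ε > 0, 2⁻¹ < ρ (closedBall x₀ ε) := by
  choose c hc using h
  have hmeet : ∀ α β (hα : 0 < α) (hβ : 0 < β), c α hα - α / 2 ≤ c β hβ + β / 2 := by
    intro α β hα hβ
    obtain ⟨y, hyα, hyβ⟩ := nonempty_inter_of_measureReal_lt_add (μ := ρ)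
      (s := Icc (c α hα - α / 2) (c α hα + α / 2)) (t := Icc (c β hβ - β / 2) (c β hβ + β / 2))
      measurableSet_Icc (subset_univ _) (subset_univ _)
      (by linarith [hc α hα, hc β hβ, probReal_univ (μ := ρ)])
    linarith [hyα.1, hyβ.2]
  obtain ⟨x₀, hx₀⟩ := exists_forall_mem_Icc_of_forall_le (ι := Ioi (0 : ℝ))
    (a := fun α => c α α.2 - α / 2) (b := fun α => c α α.2 + α / 2) fun α β => hmeet α β α.2 β.2
  refine ⟨x₀, fun ε hε => inv_two_lt_measure_iff.mpr ((hc ε hε).trans_le (measureReal_mono ?_))⟩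
  obtain ⟨h₁, h₂⟩ := hx₀ ⟨ε, hε⟩
  rw [Real.closedBall_eq_Icc]
  exact Icc_subset_Icc (by linarith) (by linarith)

end ProbabilityOnReal

theorem stmt9 (ρ : Measure ℝ) [IsProbabilityMeasure ρ]
    (E : Set ℝ → (L2 →L[ℂ] L2))
    (hE : ∀ X : Set ℝ, MeasurableSet X → IsMulByMeas ρ X (E X))
    (hγ : sInf {α : ℝ | 0 < α ∧ AlphaRegular E α} = 0) :
    ∃ (xbar : ℝ) (lam : Measure ℝ), IsProbabilityMeasure lam ∧
      (∀ ε : ℝ, 0 < ε → 0 < lam (Metric.ball xbar ε)) ∧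
      ρ = (1 / 2 : ℝ≥0∞) • Measure.dirac xbar + (1 / 2 : ℝ≥0∞) • lam := by
  obtain ⟨x₀, hx₀⟩ := exists_forall_inv_two_lt_measure_closedBall fun α hα =>
    exists_half_lt_measureReal_Icc_of_sInf_eq_zero hE hγ hα
  obtain ⟨lam, hlam, hρ⟩ := exists_eq_half_smul_dirac_add_half_smul ρ
    (le_measure_singleton_of_forall_le_measure_closedBall fun ε hε => (hx₀ ε hε).le)
  refine ⟨x₀, lam, hlam, fun ε hε => pos_iff_ne_zero.mpr fun hlam₀ => ?_, hρ⟩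
  have hball : 2⁻¹ < ρ (ball x₀ ε) :=
    (hx₀ (ε / 2) (by positivity)).trans_le (measure_mono (closedBall_subset_ball (by linarith)))
  rw [hρ] at hball
  simp [hlam₀, hε] at hball
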